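/- There exists a compact metric space (Y,d) of diameter at least 1, a continuous map f: Y → Y, and an uncountable set S ⊆ Y such that for every pair of distinct points u,v ∈ S one has Φ*_{(u,v)}(δ) = 1 for every δ > 0 and Φ_{(u,v)}(ε) = 0 for every ε with 0 < ε < 1; in particular every pair of distinct points of S is distributionally scrambled of type 1. -/
import Mathlib


open Filter Metric
open scoped Classical
open scoped Nat

/-- The lower distribution function of a pair `(x, y)` under the map `f`:
`Φ_{(x,y)}(δ) = liminf_{m→∞} (1/m)·#{k : 0 < k < m, d(f^k x, f^k y) < δ}`. -/
noncomputable def lowerDF {X : Type*} [MetricSpace X] (f : X → X) (x y : X) (δ : ℝ) : ℝ :=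
  liminf (fun m : ℕ =>
    (((Finset.Ioo 0 m).filter fun k => dist (f^[k] x) (f^[k] y) < δ).card : ℝ) / m) atTop

/-- The upper distribution function of a pair `(x, y)` under the map `f`:
`Φ*_{(x,y)}(δ) = limsup_{m→∞} (1/m)·#{k : 0 < k < m, d(f^k x, f^k y) < δ}`. -/
noncomputable def upperDF {X : Type*} [MetricSpace X] (f : X → X) (x y : X) (δ : ℝ) : ℝ :=
  limsup (fun m : ℕ =>
    (((Finset.Ioo 0 m).filter fun k => dist (f^[k] x) (f^[k] y) < δ).card : ℝ) / m) atTop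

/-- A pair of distinct points is distributionally scrambled of type 1 if `Φ* ≡ 1`
and `Φ(δ) = 0` for some `0 < δ ≤ diam X`. -/
def DistScrambled1 {X : Type*} [MetricSpace X] (f : X → X) (x y : X) : Prop :=
  x ≠ y ∧ (∀ δ > 0, upperDF f x y δ = 1) ∧
    ∃ δ, 0 < δ ∧ δ ≤ diam (Set.univ : Set X) ∧ lowerDF f x y δ = 0

/-- A pair of distinct points is distributionally scrambled of type 2 if `Φ* ≡ 1`
and `Φ(δ) < Φ*(δ)` for some `δ > 0`. -/
def DistScrambled2 {X : Type*} [MetricSpace X] (f : X → X) (x y : X) : Prop :=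
  x ≠ y ∧ (∀ δ > 0, upperDF f x y δ = 1) ∧
    ∃ δ > 0, lowerDF f x y δ < upperDF f x y δ

/-- A pair of distinct points is distributionally scrambled of type 3 if
`Φ(δ) < Φ*(δ)` for some `δ > 0`. -/
def DistScrambled3 {X : Type*} [MetricSpace X] (f : X → X) (x y : X) : Prop :=
  x ≠ y ∧ ∃ δ > 0, lowerDF f x y δ < upperDF f x y δ

namespace Stmt3Aux

noncomputable instance : MetricSpace (ℕ → Bool) := PiNat.metricSpace

theorem uncountable_funs : Uncountable (ℕ → Bool) := by
  rw [← not_countable_iff]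
  intro h
  obtain ⟨g, hg⟩ := Countable.exists_injective_nat (ℕ → Bool)
  have : Function.Injective (fun s : Set ℕ => g (fun n => decide (n ∈ s))) := by
    intro s t hst
    have := hg hst
    ext n
    have : decide (n ∈ s) = decide (n ∈ t) := congrFun this n
    simpa using this
  exact Function.cantor_injective _ this

noncomputable def shift : (ℕ → Bool) → (ℕ → Bool) := fun x n => x (n+1)

theorem shift_iterate (x : ℕ → Bool) (k : ℕ) : shift^[k] x = fun n => x (n + k) := by
  induction k with
  | zero => simp
  | succ k ih =>
    rw [Function.iterate_succ_apply', ih]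
    funext n
    show x (n + 1 + k) = x (n + (k+1))
    congr 1
    omega

theorem shift_continuous : Continuous shift := by
  apply LipschitzWith.continuous (K := 2)
  rw [lipschitzWith_iff_dist_le_mul]
  intro x y
  rcases eq_or_ne (shift x) (shift y) with h | h
  · rw [h, dist_self]; positivity
  · have hxy : x ≠ y := fun e => h (by rw [e])
    have h1 : dist (shift x) (shift y) = (1/2 : ℝ) ^ PiNat.firstDiff (shift x) (shift y) :=
      PiNat.dist_eq_of_ne h
    have h2 : dist x y = (1/2 : ℝ) ^ PiNat.firstDiff x y := PiNat.dist_eq_of_ne hxy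
    rcases eq_or_ne (x 0) (y 0) with h0 | h0
    · have key : PiNat.firstDiff x y ≤ PiNat.firstDiff (shift x) (shift y) + 1 := by
        by_contra hc
        push_neg at hc
        exact PiNat.apply_firstDiff_ne h
          (PiNat.apply_eq_of_lt_firstDiff (x := x) (y := y)
            (n := PiNat.firstDiff (shift x) (shift y) + 1) hc)
      rw [h1, h2]
      calc (1/2 : ℝ) ^ PiNat.firstDiff (shift x) (shift y)
          = 2 * (1/2 : ℝ) ^ (PiNat.firstDiff (shift x) (shift y) + 1) := by ring
        _ ≤ 2 * (1/2 : ℝ) ^ PiNat.firstDiff x y := by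
            gcongr 2 * ?_
            exact pow_le_pow_of_le_one (by norm_num) (by norm_num) key
    · have : PiNat.firstDiff x y = 0 := by
        by_contra hc
        exact h0 (PiNat.apply_eq_of_lt_firstDiff (Nat.pos_of_ne_zero hc))
      rw [h1, h2, this, pow_zero]
      calc (1/2 : ℝ) ^ PiNat.firstDiff (shift x) (shift y) ≤ 1 := by
            apply pow_le_one₀ <;> norm_num
        _ ≤ 2 * 1 := by norm_num

theorem dist_iter_le (x y : ℕ → Bool) (k n : ℕ) (h : ∀ i, i < n → x (i + k) = y (i + k)) :
    dist (shift^[k] x) (shift^[k] y) ≤ (1/2 : ℝ) ^ n := by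
  rw [shift_iterate, shift_iterate]
  rw [← PiNat.mem_cylinder_iff_dist_le]
  intro i hi
  exact h i hi

theorem apply_eq_of_iter_dist_lt_one {x y : ℕ → Bool} {k : ℕ}
    (h : dist (shift^[k] x) (shift^[k] y) < 1) : x k = y k := by
  have h' : dist (shift^[k] x) (shift^[k] y) < (1/2 : ℝ) ^ 0 := by simpa using h
  have := PiNat.apply_eq_of_dist_lt h' (le_refl 0)
  rw [shift_iterate, shift_iterate] at this
  simpa using this

/-- block index: the largest `j` with `j ! ≤ k`. -/
noncomputable def B (k : ℕ) : ℕ := Nat.findGreatest (fun j => j ! ≤ k) k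

theorem B_eq {j k : ℕ} (hj : 1 ≤ j) (h1 : j ! ≤ k) (h2 : k < (j+1)!) : B k = j := by
  rw [B, Nat.findGreatest_eq_iff]
  refine ⟨le_trans (Nat.self_le_factorial j) h1, fun _ => h1, fun n hn hnk hP => ?_⟩
  exact absurd (le_trans (Nat.factorial_le hn) hP) (not_le.2 h2)

/-- The scrambled family of points. -/
noncomputable def u (α : ℕ → Bool) : ℕ → Bool :=
  fun k => if Even (B k) then false else α (((B k - 1)/2).unpair.1)

theorem u_spec (α : ℕ → Bool) {j k : ℕ} (hj : 1 ≤ j) (h1 : j ! ≤ k) (h2 : k < (j+1)!) :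
    u α k = if Even j then false else α (((j - 1)/2).unpair.1) := by
  rw [u, B_eq hj h1 h2]

theorem u_injective : Function.Injective u := by
  intro α β h
  funext m
  set j := 2 * Nat.pair m 0 + 1 with hj
  have hj1 : 1 ≤ j := Nat.le_add_left _ _
  have hjodd : ¬ Even j := by simp [hj, Nat.even_add_one]
  have hfac : j ! < (j+1)! := (Nat.factorial_lt (by omega)).2 (by omega)
  have h1 := u_spec α hj1 (le_refl (j !)) hfac
  have h2 := u_spec β hj1 (le_refl (j !)) hfac
  have hq : (j - 1)/2 = Nat.pair m 0 := by omega
  rw [if_neg hjodd, hq, Nat.unpair_pair] at h1 h2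
  rw [← h1, ← h2, h]


theorem frac_le_one (x y : ℕ → Bool) (δ : ℝ) (m : ℕ) :
    (((Finset.Ioo 0 m).filter fun k => dist (shift^[k] x) (shift^[k] y) < δ).card : ℝ) / m ≤ 1 := by
  rcases Nat.eq_zero_or_pos m with rfl | hm
  · simp
  · rw [div_le_one (by exact_mod_cast hm)]
    have h1 : ((Finset.Ioo 0 m).filter fun k => dist (shift^[k] x) (shift^[k] y) < δ).card
        ≤ (Finset.Ioo 0 m).card := Finset.card_filter_le _ _
    have h2 : (Finset.Ioo 0 m).card ≤ m := by rw [Nat.card_Ioo]; omega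
    exact_mod_cast le_trans h1 h2

theorem frac_nonneg (x y : ℕ → Bool) (δ : ℝ) (m : ℕ) :
    0 ≤ (((Finset.Ioo 0 m).filter fun k => dist (shift^[k] x) (shift^[k] y) < δ).card : ℝ) / m := by
  positivity

theorem upper_aux (α β : ℕ → Bool) (δ : ℝ) (hδ : 0 < δ) :
    upperDF shift (u α) (u β) δ = 1 := by
  rw [upperDF]
  set A := fun m : ℕ =>
    (((Finset.Ioo 0 m).filter fun k => dist (shift^[k] (u α)) (shift^[k] (u β)) < δ).card : ℝ) / m
    with hAdef
  have hA1 : ∀ m, A m ≤ 1 := fun m => frac_le_one _ _ _ _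
  have hA0 : ∀ m, 0 ≤ A m := fun m => frac_nonneg _ _ _ _
  have hb : IsBoundedUnder (· ≤ ·) atTop A := isBoundedUnder_of ⟨1, hA1⟩
  apply le_antisymm
  · exact limsup_le_of_le (isCoboundedUnder_le_of_le atTop hA0) (Eventually.of_forall hA1)
  · apply le_of_forall_sub_le
    intro η hη
    refine le_limsup_of_frequently_le ?_ hb
    rw [frequently_atTop]
    intro M
    obtain ⟨N, hN⟩ : ∃ N, (1/2:ℝ)^N < δ := exists_pow_lt_of_lt_one hδ (by norm_num)
    set t := max M N + ⌈2/η⌉₊ + 1 with ht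
    set j := 2*t with hj
    have hj1 : 1 ≤ j := by omega
    have hjeven : Even j := ⟨t, by omega⟩
    have hNj : N ≤ j := by omega
    have hjf : N ≤ j ! := le_trans hNj (Nat.self_le_factorial j)
    have hfe : (j+1)! = (j+1) * j ! := Nat.factorial_succ j
    have hNsum : N + j ! ≤ (j+1)! := by
      have h2 : 2 * j ! ≤ (j+1) * j ! := Nat.mul_le_mul_right _ (by omega)
      omega
    refine ⟨(j+1)!, ?_, ?_⟩
    · have : M ≤ j + 1 := by omega
      exact le_trans this (Nat.self_le_factorial _)
    · -- counting
      have hsub : Finset.Ico (j !) ((j+1)! - N) ⊆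
          (Finset.Ioo 0 ((j+1)!)).filter
            (fun k => dist (shift^[k] (u α)) (shift^[k] (u β)) < δ) := by
        intro k hk
        simp only [Finset.mem_Ico] at hk
        simp only [Finset.mem_filter, Finset.mem_Ioo]
        have hk1 : 0 < k := lt_of_lt_of_le (Nat.factorial_pos j) hk.1
        have hk2 : k + N < (j+1)! := by omega
        refine ⟨⟨hk1, by omega⟩, lt_of_le_of_lt (dist_iter_le _ _ k N ?_) hN⟩
        intro i hi
        have hpos1 : j ! ≤ i + k := le_trans hk.1 (Nat.le_add_left _ _)
        have hpos2 : i + k < (j+1)! := by omega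
        rw [u_spec α hj1 hpos1 hpos2, u_spec β hj1 hpos1 hpos2, if_pos hjeven, if_pos hjeven]
      have hcard : (j+1)! - N - j ! ≤
          ((Finset.Ioo 0 ((j+1)!)).filter
            (fun k => dist (shift^[k] (u α)) (shift^[k] (u β)) < δ)).card := by
        calc (j+1)! - N - j ! = (Finset.Ico (j !) ((j+1)! - N)).card := by
              rw [Nat.card_Ico]
          _ ≤ _ := Finset.card_le_card hsub
      -- real arithmetic
      have hF : (0:ℝ) < ((j+1)! : ℝ) := by exact_mod_cast Nat.factorial_pos _
      have hCF : ((j+1)! : ℝ) - (N + (j ! : ℝ)) ≤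
          (((Finset.Ioo 0 ((j+1)!)).filter
            (fun k => dist (shift^[k] (u α)) (shift^[k] (u β)) < δ)).card : ℝ) := by
        have he : (j+1)! - N - j ! = (j+1)! - (N + j !) := by omega
        calc ((j+1)! : ℝ) - (N + (j ! : ℝ)) = (((j+1)! - N - j ! : ℕ) : ℝ) := by
              rw [he, Nat.cast_sub hNsum]; push_cast; ring
          _ ≤ _ := by exact_mod_cast hcard
      show 1 - η ≤ A ((j+1)!)
      rw [hAdef]
      simp only
      rw [le_div_iff₀ hF]
      have h2η : 2/η ≤ (j:ℝ)+1 := by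
        calc 2/η ≤ (⌈2/η⌉₊ : ℝ) := Nat.le_ceil _
          _ ≤ (j:ℝ)+1 := by exact_mod_cast Nat.le_of_lt (by omega)
      have hη2 : 2 ≤ η * ((j:ℝ)+1) := by
        rw [div_le_iff₀ hη] at h2η
        linarith
      have hNle : (N:ℝ) ≤ (j ! : ℝ) := by exact_mod_cast hjf
      have hFe : ((j+1)! : ℝ) = ((j:ℝ)+1) * (j ! : ℝ) := by rw [hfe]; push_cast; ring
      have hjfpos : (1:ℝ) ≤ (j ! : ℝ) := by exact_mod_cast Nat.factorial_pos j
      nlinarith [mul_le_mul_of_nonneg_right hη2 (le_trans zero_le_one hjfpos)]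

theorem lower_aux (α β : ℕ → Bool) {m₀ : ℕ} (hm : α m₀ ≠ β m₀) (ε : ℝ)
    (hε0 : 0 < ε) (hε1 : ε < 1) : lowerDF shift (u α) (u β) ε = 0 := by
  rw [lowerDF]
  set A := fun m : ℕ =>
    (((Finset.Ioo 0 m).filter fun k => dist (shift^[k] (u α)) (shift^[k] (u β)) < ε).card : ℝ) / m
    with hAdef
  have hA1 : ∀ m, A m ≤ 1 := fun m => frac_le_one _ _ _ _
  have hA0 : ∀ m, 0 ≤ A m := fun m => frac_nonneg _ _ _ _
  have hge : ∀ η : ℝ, 0 < η → liminf A atTop ≤ η := by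
    intro η hη
    refine liminf_le_of_frequently_le ?_ (isBoundedUnder_of ⟨0, hA0⟩)
    rw [frequently_atTop]
    intro M
    set r := max M ⌈1/η⌉₊ + 1 with hr
    set j := 2 * Nat.pair m₀ r + 1 with hj
    have hpr : r ≤ Nat.pair m₀ r := Nat.right_le_pair _ _
    have hj1 : 1 ≤ j := by omega
    have hjodd : ¬ Even j := by simp [hj, Nat.even_add_one]
    have hq : (j - 1)/2 = Nat.pair m₀ r := by omega
    refine ⟨(j+1)!, ?_, ?_⟩
    · have : M ≤ j + 1 := by omega
      exact le_trans this (Nat.self_le_factorial _)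
    · have hsub : (Finset.Ioo 0 ((j+1)!)).filter
            (fun k => dist (shift^[k] (u α)) (shift^[k] (u β)) < ε) ⊆
          Finset.Ioo 0 (j !) := by
        intro k hk
        simp only [Finset.mem_filter, Finset.mem_Ioo] at hk
        obtain ⟨⟨hk1, hk2⟩, hkd⟩ := hk
        have heq : u α k = u β k :=
          apply_eq_of_iter_dist_lt_one (lt_trans hkd hε1)
        by_contra hc
        have hge' : j ! ≤ k := by
          simp only [Finset.mem_Ioo] at hc
          omega
        rw [u_spec α hj1 hge' hk2, u_spec β hj1 hge' hk2, if_neg hjodd, if_neg hjodd,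
          hq, Nat.unpair_pair] at heq
        exact hm heq
      have hcard : ((Finset.Ioo 0 ((j+1)!)).filter
            (fun k => dist (shift^[k] (u α)) (shift^[k] (u β)) < ε)).card ≤ j ! := by
        calc _ ≤ (Finset.Ioo 0 (j !)).card := Finset.card_le_card hsub
          _ ≤ j ! := by rw [Nat.card_Ioo]; omega
      show A ((j+1)!) ≤ η
      rw [hAdef]
      simp only
      have hF : (0:ℝ) < ((j+1)! : ℝ) := by exact_mod_cast Nat.factorial_pos _
      rw [div_le_iff₀ hF]
      have hfe : ((j+1)! : ℝ) = ((j:ℝ)+1) * (j ! : ℝ) := by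
        rw [Nat.factorial_succ]; push_cast; ring
      have h1η : 1/η ≤ (j:ℝ)+1 := by
        calc 1/η ≤ (⌈1/η⌉₊ : ℝ) := Nat.le_ceil _
          _ ≤ (j:ℝ)+1 := by exact_mod_cast Nat.le_of_lt (by omega)
      have hη1 : 1 ≤ η * ((j:ℝ)+1) := by
        rw [div_le_iff₀ hη] at h1η
        linarith
      have hC : (((Finset.Ioo 0 ((j+1)!)).filter
            (fun k => dist (shift^[k] (u α)) (shift^[k] (u β)) < ε)).card : ℝ) ≤ (j ! : ℝ) := by
        exact_mod_cast hcard
      have hjfpos : (0:ℝ) < (j ! : ℝ) := by exact_mod_cast Nat.factorial_pos j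
      calc (((Finset.Ioo 0 ((j+1)!)).filter
            (fun k => dist (shift^[k] (u α)) (shift^[k] (u β)) < ε)).card : ℝ)
          ≤ (j ! : ℝ) := hC
        _ ≤ η * (((j:ℝ)+1) * (j ! : ℝ)) := by nlinarith
        _ = η * ((j+1)! : ℝ) := by rw [hfe]
  have h0 : 0 ≤ liminf A atTop :=
    le_liminf_of_le (isCoboundedUnder_ge_of_le atTop hA1) (Eventually.of_forall hA0)
  refine le_antisymm ?_ h0
  by_contra hc
  push_neg at hc
  have := hge (liminf A atTop / 2) (by linarith)
  linarith


theorem diam_ge : 1 ≤ diam (Set.univ : Set (ℕ → Bool)) := by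
  have hne : (fun _ => false : ℕ → Bool) ≠ (fun _ => true) := by
    intro h; simpa using congrFun h 0
  have h1 : dist (fun _ => false : ℕ → Bool) (fun _ => true) = 1 := by
    rw [PiNat.dist_eq_of_ne hne]
    have h0 : PiNat.firstDiff (fun _ => false : ℕ → Bool) (fun _ => true) = 0 := by
      by_contra hc
      have := PiNat.apply_eq_of_lt_firstDiff (x := (fun _ => false : ℕ → Bool))
        (y := (fun _ => true)) (n := 0) (Nat.pos_of_ne_zero hc)
      simp at this
    rw [h0, pow_zero]
  calc (1:ℝ) = dist (fun _ => false : ℕ → Bool) (fun _ => true) := h1.symm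
    _ ≤ diam Set.univ := dist_le_diam_of_mem isCompact_univ.isBounded trivial trivial

end Stmt3Aux


/-- There is a compact metric space `Y` of diameter at least `1`, a continuous
`f : Y → Y` and an uncountable `S ⊆ Y` such that for all distinct `u, v ∈ S`,
`Φ*_{(u,v)}(δ) = 1` for every `δ > 0` and `Φ_{(u,v)}(ε) = 0` for every
`0 < ε < 1`; in particular every pair of distinct points of `S` is
distributionally scrambled of type 1. -/
theorem stmt3 :
    ∃ (Y : Type) (_ : MetricSpace Y) (_ : CompactSpace Y) (f : Y → Y),
      1 ≤ diam (Set.univ : Set Y) ∧ Continuous f ∧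
      ∃ S : Set Y, ¬ S.Countable ∧
        ∀ u ∈ S, ∀ v ∈ S, u ≠ v →
          (∀ δ > 0, upperDF f u v δ = 1) ∧
          (∀ ε, 0 < ε → ε < 1 → lowerDF f u v ε = 0) ∧
          DistScrambled1 f u v := by
  classical
  haveI := Stmt3Aux.uncountable_funs
  refine ⟨ℕ → Bool, inferInstance, inferInstance, Stmt3Aux.shift, Stmt3Aux.diam_ge,
    Stmt3Aux.shift_continuous, Set.range Stmt3Aux.u, ?_, ?_⟩
  · intro h
    have h2 : (Set.univ : Set (ℕ → Bool)).Countable := by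
      have := h.preimage Stmt3Aux.u_injective
      simpa using this
    exact Set.not_countable_univ h2
  · rintro _ ⟨α, rfl⟩ _ ⟨β, rfl⟩ hne
    have hab : α ≠ β := fun e => hne (by rw [e])
    obtain ⟨m₀, hm₀⟩ := Function.ne_iff.1 hab
    exact ⟨fun δ hδ => Stmt3Aux.upper_aux α β δ hδ,
      fun ε hε0 hε1 => Stmt3Aux.lower_aux α β hm₀ ε hε0 hε1,
      hne, fun δ hδ => Stmt3Aux.upper_aux α β δ hδ,
      ⟨1/2, by norm_num, le_trans (by norm_num) Stmt3Aux.diam_ge,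
        Stmt3Aux.lower_aux α β hm₀ (1/2) (by norm_num) (by norm_num)⟩⟩
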